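/- For each cd-word u of degree n, the column sums Σ_u 2^{|w|_d+1} η_{u,w} over all u equal 2^{n+1} for every cd-word w of degree n; equivalently, 2^{|w|_d+1} · #{T ⊆ [n] : T, [n]\T ∈ b[I^w]} = 2^{n+1}. -/

import Mathlib

/-- The degree of a cd-word (`false` = c, degree 1; `true` = d, degree 2). -/
def degw (w : List Bool) : ℕ := (w.map (fun b => if b then 2 else 1)).sum

/-- The left sparse set `S_w` of a cd-word: degrees of prefixes ending at each d. -/
def Sw (w : List Bool) : Finset ℕ :=
  ((Finset.range w.length).filter (fun j => w.getD j false = true)).image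
    (fun j => degw (w.take (j + 1)))

/-- `T ∈ b[I^w]`: `T` meets every interval `{i-1, i}` with `i ∈ S_w`. -/
def blocks (w : List Bool) (T : Finset ℕ) : Prop := ∀ i ∈ Sw w, i - 1 ∈ T ∨ i ∈ T

instance (w : List Bool) (T : Finset ℕ) : Decidable (blocks w T) := by
  unfold blocks; infer_instance

/-!
`T` and `[n] \ T` both block `I^w` iff `T` contains exactly one point of each interval
`{i - 1, i}`, `i ∈ S_w`. Since `S_w` is sparse, `i - 1 ∉ S_w` for `i ∈ S_w`, so toggling the
point `i` flips the constraint at `i` and preserves all others. Each of the `|w|_d`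
constraints therefore halves the number of subsets of `[n]`.
-/

open Finset
open scoped symmDiff

theorem Finset.card_filter_powerset_mem_iff_notMem_mul_two_pow {α : Type*} [DecidableEq α]
    (f : α → α) {s A : Finset α} (hAs : A ⊆ s) (hf : ∀ a ∈ A, f a ∉ A) :
    #{T ∈ s.powerset | ∀ a ∈ A, f a ∈ T ↔ a ∉ T} * 2 ^ #A = 2 ^ #s := by
  induction A using Finset.induction_on with
  | empty => simp
  | @insert a A haA ih =>
    have has : a ∈ s := hAs (mem_insert_self a A)
    have hfa : f a ≠ a := fun h => hf a (mem_insert_self a A) (by simp [h])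
    have hfar : ∀ i ∈ A, i ≠ a ∧ f i ≠ a := fun i hi =>
      ⟨ne_of_mem_of_not_mem hi haA,
        fun h => hf i (mem_insert_of_mem hi) (by simp [h])⟩
    set F := {T ∈ s.powerset | ∀ i ∈ A, f i ∈ T ↔ i ∉ T}
    have hmaps : ∀ T ∈ F, T ∆ {a} ∈ F := by
      simp only [F, mem_filter, mem_powerset]
      intro T ⟨hTs, hT⟩
      refine ⟨symmDiff_subset_union.trans (union_subset hTs (singleton_subset_iff.mpr has)),
        fun i hi => ?_⟩
      simp [mem_symmDiff, (hfar i hi).1, (hfar i hi).2, hT i hi]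
    have hflip : ∀ T : Finset α,
        (f a ∈ T ∆ {a} ↔ a ∉ T ∆ {a}) ↔ ¬(f a ∈ T ↔ a ∉ T) := by
      intro T
      simp only [mem_symmDiff, mem_singleton, hfa, and_false, not_true, not_not, true_and,
        false_or]
      tauto
    have hhalf : #{T ∈ F | f a ∈ T ↔ a ∉ T} = #{T ∈ F | ¬(f a ∈ T ↔ a ∉ T)} := by
      refine card_nbij' (· ∆ {a}) (· ∆ {a}) ?_ ?_ ?_ ?_
      · intro T hT
        rw [mem_coe, mem_filter] at hT ⊢
        exact ⟨hmaps T hT.1, (hflip T).not.mpr (not_not.mpr hT.2)⟩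
      · intro T hT
        rw [mem_coe, mem_filter] at hT ⊢
        exact ⟨hmaps T hT.1, (hflip T).mpr hT.2⟩
      · intro T _; exact symmDiff_symmDiff_cancel_right _ _
      · intro T _; exact symmDiff_symmDiff_cancel_right _ _
    have hsplit := card_filter_add_card_filter_not (s := F) (p := fun T => f a ∈ T ↔ a ∉ T)
    have hF : {T ∈ F | f a ∈ T ↔ a ∉ T} =
        {T ∈ s.powerset | ∀ i ∈ insert a A, f i ∈ T ↔ i ∉ T} := by
      simp only [F, filter_filter, forall_mem_insert, and_comm]
    rw [← hF, card_insert_of_notMem haA, pow_succ, ← ih (insert_subset_iff.mp hAs).2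
      (fun i hi h => hf i (mem_insert_of_mem hi) (mem_insert_of_mem h)), ← hsplit, ← hhalf]
    ring

@[simp] lemma degw_append (u v : List Bool) : degw (u ++ v) = degw u + degw v := by
  simp [degw]

lemma degw_take_succ (w : List Bool) {k : ℕ} (hk : k < w.length) :
    degw (w.take (k + 1)) = degw (w.take k) + if w[k] then 2 else 1 := by
  rw [List.take_add_one, List.getElem?_eq_getElem hk, degw_append]
  simp [degw]

lemma degw_take_mono (w : List Bool) : Monotone fun k => degw (w.take k) := by
  intro j k hjk
  dsimp only
  rw [← List.take_append_drop j (w.take k), List.take_take, min_eq_left hjk, degw_append]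
  exact Nat.le_add_right _ _

lemma degw_take_strictMonoOn (w : List Bool) :
    StrictMonoOn (fun k => degw (w.take k)) (Set.Iic w.length) := by
  intro j _ k hk hjk
  obtain ⟨k, rfl⟩ := Nat.exists_eq_add_of_lt hjk
  calc degw (w.take j) ≤ degw (w.take (j + k)) := degw_take_mono w (Nat.le_add_right j k)
    _ < degw (w.take (j + k + 1)) := by
      rw [degw_take_succ w (by simp at hk; omega)]; split <;> omega

lemma mem_Sw {w : List Bool} {i : ℕ} :
    i ∈ Sw w ↔ ∃ j, ∃ hj : j < w.length, w[j] ∧ degw (w.take (j + 1)) = i := by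
  simp only [Sw, mem_image, mem_filter, mem_range]
  constructor
  · rintro ⟨j, ⟨hj, hd⟩, rfl⟩
    exact ⟨j, hj, by rwa [List.getD_eq_getElem _ _ hj] at hd, rfl⟩
  · rintro ⟨j, hj, hd, rfl⟩
    exact ⟨j, ⟨hj, by rwa [List.getD_eq_getElem _ _ hj]⟩, rfl⟩

lemma card_filter_getD_eq_count (w : List Bool) :
    #{j ∈ range w.length | w.getD j false = true} = w.count true := by
  rw [← Nat.count_eq_card_filter_range]
  induction w with
  | nil => simp
  | cons b t ih =>
    rw [List.length_cons, Nat.count_succ', List.count_cons]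
    simp only [List.getD_cons_succ, List.getD_cons_zero, ih]
    cases b <;> rfl

lemma Sw_subset_Icc (w : List Bool) : Sw w ⊆ Icc 2 (degw w) := by
  intro i hi
  obtain ⟨j, hj, hd, rfl⟩ := mem_Sw.mp hi
  rw [mem_Icc]
  constructor
  · rw [degw_take_succ w hj, if_pos hd]
    omega
  · simpa using degw_take_mono w (Nat.succ_le_of_lt hj)

lemma sub_one_notMem_Sw {w : List Bool} {i : ℕ} (hi : i ∈ Sw w) : i - 1 ∉ Sw w := by
  obtain ⟨j, hj, hd, rfl⟩ := mem_Sw.mp hi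
  intro h
  obtain ⟨k, -, -, hk⟩ := mem_Sw.mp h
  have hstep := degw_take_succ w hj
  rw [if_pos hd] at hstep
  rcases lt_or_ge k j with hkj | hjk
  · have := degw_take_mono w (show k + 1 ≤ j by omega)
    simp only at this
    omega
  · have := degw_take_mono w (show j + 1 ≤ k + 1 by omega)
    simp only at this
    omega

lemma card_Sw (w : List Bool) : #(Sw w) = w.count true := by
  rw [Sw, card_image_of_injOn, card_filter_getD_eq_count]
  intro j hj k hk hjk
  simp only [coe_filter, mem_range, Set.mem_ofPred_eq] at hj hk
  exact Nat.succ_injective <| (degw_take_strictMonoOn w).injOn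
    (Set.mem_Iic.mpr hj.1) (Set.mem_Iic.mpr hk.1) hjk

lemma blocks_and_blocks_sdiff_iff {w : List Bool} {s T : Finset ℕ}
    (hs : ∀ i ∈ Sw w, i - 1 ∈ s ∧ i ∈ s) :
    blocks w T ∧ blocks w (s \ T) ↔ ∀ i ∈ Sw w, i - 1 ∈ T ↔ i ∉ T := by
  simp only [blocks, mem_sdiff, ← forall₂_and]
  refine forall₂_congr fun i hi => ?_
  have := hs i hi
  tauto

/-- for every cd-word `w` of degree `n` (with `|w|_d` the number of
d's in `w`), `2^{|w|_d + 1} · #{T ⊆ [n] : T, [n]\T ∈ b[I^w]} = 2^{n+1}`, i.e. each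
column sum of the matrix of `ϑ` equals `2^{n+1}`. -/
theorem stmt_14 (n : ℕ) (w : List Bool) (hw : degw w = n) :
    2 ^ (w.count true + 1) *
        ((Finset.Icc 1 n).powerset.filter
          (fun T => blocks w T ∧ blocks w (Finset.Icc 1 n \ T))).card
      = 2 ^ (n + 1) := by
  subst hw
  have hSw : ∀ i ∈ Sw w, i - 1 ∈ Icc 1 (degw w) ∧ i ∈ Icc 1 (degw w) := fun i hi => by
    have := mem_Icc.mp (Sw_subset_Icc w hi)
    constructor <;> rw [mem_Icc] <;> omega
  have hcount := card_filter_powerset_mem_iff_notMem_mul_two_pow (· - 1)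
    (fun i hi => (hSw i hi).2) (fun i hi => sub_one_notMem_Sw hi)
  rw [card_Sw, Nat.card_Icc, Nat.add_sub_cancel] at hcount
  rw [filter_congr fun T _ => blocks_and_blocks_sdiff_iff hSw, pow_succ, pow_succ, ← hcount]
  ring
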